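/- arXiv:2302.12465 — 2 statements merged into one kernel-verified Lean document; each statement's English description precedes it below -/
import Mathlib

section
/- Let G be a finite simple graph with n vertices and maximum degree D ≥ 1, and let B ≥ 1 be a natural number. Then the number of subgraphs of G that are trees with exactly B vertices is at most n · D^(2B-2). -/
/-!
A tree on `B` vertices has a closed walk of length `2B - 2` that traverses every edge (each one
twice, as in a depth-first traversal): remove a leaf `x` with neighbour `y`, take such a walk of
the smaller tree, and splice in the detour `y → x → y`. The walk, read as a subgraph, recovers the
tree, so the `B`-vertex subtrees of `G` are at most as many as the closed walks of length `2B - 2`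
in `G`. There are at most `n` choices of the start and at most `D` choices at each step.
-/

open SimpleGraph Finset

namespace SimpleGraph

variable {V : Type*} {G : SimpleGraph V}

theorem sum_card_finsetWalkLength_le [Fintype V] [DecidableEq V] [DecidableRel G.Adj] {D : ℕ}
    (hdeg : ∀ v, G.degree v ≤ D) (n : ℕ) (u : V) :
    ∑ v, #(G.finsetWalkLength n u v) ≤ D ^ n := by
  induction n generalizing u with
  | zero =>
    simp only [finsetWalkLength]
    rw [sum_eq_single u (fun v _ huv => by simp [Ne.symm huv]) (by simp)]
    simp
  | succ n ih =>
    calc ∑ v, #(G.finsetWalkLength (n + 1) u v)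
        ≤ ∑ v, ∑ w : G.neighborSet u, #(G.finsetWalkLength n w v) := by
          gcongr with v
          exact card_biUnion_le.trans (by simp)
      _ = ∑ w : G.neighborSet u, ∑ v, #(G.finsetWalkLength n w v) := sum_comm
      _ ≤ ∑ _w : G.neighborSet u, D ^ n := by gcongr with w; exact ih w
      _ = G.degree u * D ^ n := by
          rw [sum_const, card_univ, card_neighborSet_eq_degree, smul_eq_mul]
      _ ≤ D ^ (n + 1) := by rw [pow_succ']; gcongr; exact hdeg u

theorem card_finsetWalkLength_le [Fintype V] [DecidableEq V] [DecidableRel G.Adj] {D : ℕ}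
    (hdeg : ∀ v, G.degree v ≤ D) (n : ℕ) (u v : V) : #(G.finsetWalkLength n u v) ≤ D ^ n :=
  (single_le_sum (fun _ _ => Nat.zero_le _) (mem_univ v)).trans
    (sum_card_finsetWalkLength_le hdeg n u)

theorem exists_closed_walk_toSubgraph_eq_top_of_leaf {x y : V} {r : ({x}ᶜ : Set V)}
    (hxy : G.Adj x y) (hleaf : ∀ z, G.Adj x z → z = y) (w : (G.induce {x}ᶜ).Walk r r) (hw : w.toSubgraph = ⊤) :
    ∃ c : G.Walk y y, c.length = w.length + 2 ∧ c.toSubgraph = ⊤ := by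
  classical
  let ι := (Embedding.induce (G := G) {x}ᶜ).toHom
  have hw' : (w.map ι).toSubgraph = (⊤ : (G.induce {x}ᶜ).Subgraph).map ι := by
    rw [Walk.toSubgraph_map, hw]
  have hverts : ∀ ⦃v⦄, v ≠ x → v ∈ (w.map ι).support := fun v hv => by
    rw [← Walk.mem_verts_toSubgraph, hw']
    exact ⟨⟨v, hv⟩, trivial, rfl⟩
  have hedges : ∀ ⦃a⦄, a ≠ x → ∀ ⦃b⦄, b ≠ x → G.Adj a b → (w.map ι).toSubgraph.Adj a b :=
    fun a ha b hb hab => by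
      rw [hw', Subgraph.map_adj]
      exact ⟨⟨a, ha⟩, ⟨b, hb⟩, hab, rfl, rfl⟩
  have hy : y ∈ (w.map ι).support := hverts hxy.ne.symm
  refine ⟨.cons hxy.symm (.cons hxy ((w.map ι).rotate y hy)), by simp, ?_⟩
  refine eq_top_iff.mpr ⟨fun v _ => ?_, fun a b hab => ?_⟩
  · simp only [Walk.mem_verts_toSubgraph, Walk.support_cons, List.mem_cons,
      Walk.mem_support_rotate_iff]
    by_cases hv : v = x
    · exact Or.inr (Or.inl hv)
    · exact Or.inr (Or.inr (hverts hv))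
  · simp only [Walk.toSubgraph, Walk.toSubgraph_rotate, Subgraph.sup_adj, subgraphOfAdj_adj]
    by_cases ha : a = x
    · subst ha; simp [hleaf b hab]
    by_cases hb : b = x
    · subst hb; simp [hleaf a hab.symm]
    exact Or.inr (Or.inr (hedges ha hb hab))

theorem IsTree.exists_closed_walk_toSubgraph_eq_top [Finite V] (hT : G.IsTree) :
    ∃ (r : V) (c : G.Walk r r), c.length = 2 * (Nat.card V - 1) ∧ c.toSubgraph = ⊤ := by
  induction hn : Nat.card V using Nat.strong_induction_on generalizing V with
  | _ n ih =>
  classical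
  rcases subsingleton_or_nontrivial V with hV | hV
  · obtain ⟨r⟩ := hT.connected.nonempty
    have hn1 : n ≤ 1 := hn ▸ Finite.card_le_one_iff_subsingleton.mpr hV
    refine ⟨r, .nil, by rw [Walk.length_nil]; omega, eq_top_iff.mpr ⟨fun v _ => ?_, fun a b hab => ?_⟩⟩
    · simp [Subsingleton.elim v r]
    · exact (hab.ne (Subsingleton.elim a b)).elim
  · have := Fintype.ofFinite V
    obtain ⟨x, hx⟩ := hT.exists_vert_degree_one_of_nontrivial
    obtain ⟨y, hxy, hleaf⟩ := degree_eq_one_iff_existsUnique_adj.mp hx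
    have hcard : Nat.card ({x}ᶜ : Set V) + 1 = n := by
      rw [← hn, Nat.card_coe_set_eq, Set.compl_eq_univ_sdiff, ← Set.ncard_univ]
      exact Set.ncard_sdiff_singleton_add_one (Set.mem_univ x)
    have hT' : (G.induce {x}ᶜ).IsTree :=
      ⟨hT.connected.induce_compl_singleton_of_degree_eq_one hx, hT.isAcyclic.induce _⟩
    obtain ⟨r', w, hw, hw_top⟩ := ih _ (by omega) hT' rfl
    obtain ⟨c, hc, hc_top⟩ := exists_closed_walk_toSubgraph_eq_top_of_leaf hxy hleaf w hw_top
    have : 1 < n := hn ▸ Finite.one_lt_card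
    exact ⟨y, c, by omega, hc_top⟩

end SimpleGraph

theorem stmt_6_general {V : Type*} [Fintype V] (G : SimpleGraph V)
    [DecidableRel G.Adj] (D B : ℕ)
    (hdeg : ∀ v : V, G.degree v ≤ D) :
    Nat.card {H : G.Subgraph // H.coe.IsTree ∧ H.verts.ncard = B} ≤
      Fintype.card V * D ^ (2 * B - 2) := by
  classical
  let closedWalks := univ.sigma fun r => G.finsetWalkLength (2 * B - 2) r r
  have hcover : {H : G.Subgraph | H.coe.IsTree ∧ H.verts.ncard = B} ⊆
      closedWalks.image fun c => c.2.toSubgraph := by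
    rintro H ⟨hT, hB⟩
    obtain ⟨r, c, hc, hc_top⟩ := hT.exists_closed_walk_toSubgraph_eq_top
    rw [Nat.card_coe_set_eq, hB] at hc
    refine mem_image.mpr ⟨⟨H.hom r, c.map H.hom⟩, ?_, ?_⟩
    · refine mem_sigma.mpr ⟨mem_univ _, mem_finsetWalkLength_iff.mpr ?_⟩
      rw [Walk.length_map, hc]
      omega
    · dsimp only
      rw [Walk.toSubgraph_map, hc_top, Subgraph.map_hom_top]
  calc Nat.card {H : G.Subgraph // H.coe.IsTree ∧ H.verts.ncard = B}
      ≤ #(closedWalks.image fun c => c.2.toSubgraph) :=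
        (Set.ncard_le_ncard hcover (finite_toSet _)).trans_eq (Set.ncard_coe_finset _)
    _ ≤ #closedWalks := card_image_le
    _ = ∑ r, #(G.finsetWalkLength (2 * B - 2) r r) := card_sigma _ _
    _ ≤ ∑ _r : V, D ^ (2 * B - 2) := by gcongr; exact card_finsetWalkLength_le hdeg _ _ _
    _ = Fintype.card V * D ^ (2 * B - 2) := by simp

/-- Upper-bound half of Lemma C.2: in a finite simple graph `G` with `n` vertices and
maximum degree at most `D ≥ 1`, the number of subgraphs that are trees with exactly
`B ≥ 1` vertices is at most `n * D ^ (2 * B - 2)`. -/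
theorem stmt_6 {V : Type*} [Fintype V] [DecidableEq V] (G : SimpleGraph V)
    [DecidableRel G.Adj] (D B : ℕ) (hD : 1 ≤ D) (hB : 1 ≤ B)
    (hdeg : ∀ v : V, G.degree v ≤ D) :
    Nat.card {H : G.Subgraph // H.coe.IsTree ∧ H.verts.ncard = B} ≤
      Fintype.card V * D ^ (2 * B - 2) :=
  stmt_6_general G D B hdeg
end

section
/- Let k ≥ 3 be a natural number and for μ > 0 define ψ_{k-1}(μ) = Σ_{i=k-1}^∞ e^(−μ) μ^i / i!, the probability that a Poisson random variable with mean μ is at least k-1. Let c_k = inf_{μ>0} μ/ψ_{k-1}(μ). Then for every real number c with c > c_k, there exist real numbers 0 < μ₁ < μ₂ such that μ₁/ψ_{k-1}(μ₁) = c and μ₂/ψ_{k-1}(μ₂) = c; that is, the equation μ/ψ_{k-1}(μ) = c has at least two roots. -/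
/-- `ψ_j(μ) = P(Po(μ) ≥ j) = ∑_{i ≥ j} e^(-μ) μ^i / i!`, the tail probability of a
Poisson random variable with mean `μ`. -/
noncomputable def poissonTail (j : ℕ) (μ : ℝ) : ℝ :=
  ∑' i : ℕ, if j ≤ i then Real.exp (-μ) * μ ^ i / (Nat.factorial i : ℝ) else 0

lemma summable_pois (μ : ℝ) :
    Summable (fun i : ℕ => Real.exp (-μ) * μ ^ i / (Nat.factorial i : ℝ)) := by
  have h := Real.summable_pow_div_factorial μ
  simpa [mul_div_assoc] using h.mul_left (Real.exp (-μ))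

lemma summable_if (j : ℕ) (μ : ℝ) :
    Summable (fun i : ℕ => if j ≤ i then Real.exp (-μ) * μ ^ i / (Nat.factorial i : ℝ) else 0) := by
  have h := (summable_pois μ).indicator {i : ℕ | j ≤ i}
  have he : (Set.indicator {i : ℕ | j ≤ i}
      (fun i : ℕ => Real.exp (-μ) * μ ^ i / (Nat.factorial i : ℝ)))
      = fun i : ℕ => if j ≤ i then Real.exp (-μ) * μ ^ i / (Nat.factorial i : ℝ) else 0 := by
    funext i
    simp [Set.indicator_apply, Set.mem_setOf_eq]
  rwa [he] at h

lemma tsum_pois (μ : ℝ) :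
    ∑' i : ℕ, Real.exp (-μ) * μ ^ i / (Nat.factorial i : ℝ) = 1 := by
  have h : ∑' i : ℕ, μ ^ i / (Nat.factorial i : ℝ) = Real.exp μ := by
    rw [Real.exp_eq_exp_ℝ, NormedSpace.exp_eq_tsum_div]
  calc ∑' i : ℕ, Real.exp (-μ) * μ ^ i / (Nat.factorial i : ℝ)
      = Real.exp (-μ) * ∑' i : ℕ, μ ^ i / (Nat.factorial i : ℝ) := by
        rw [← tsum_mul_left]; simp [mul_div_assoc]
    _ = 1 := by rw [h, ← Real.exp_add]; simp

lemma poissonTail_eq (j : ℕ) (μ : ℝ) :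
    poissonTail j μ = 1 - ∑ i ∈ Finset.range j,
      Real.exp (-μ) * μ ^ i / (Nat.factorial i : ℝ) := by
  have hs := summable_pois μ
  have hg := summable_if j μ
  have key := Summable.sum_add_tsum_nat_add
    (f := fun i => if j ≤ i then Real.exp (-μ) * μ ^ i / (Nat.factorial i : ℝ) else 0) j hg
  have h1 : ∑ i ∈ Finset.range j,
      (if j ≤ i then Real.exp (-μ) * μ ^ i / (Nat.factorial i : ℝ) else 0) = 0 := by
    apply Finset.sum_eq_zero
    intro i hi
    simp [Nat.not_le.mpr (Finset.mem_range.mp hi)]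
  have h2 : (fun i : ℕ => if j ≤ i + j then Real.exp (-(μ)) * μ ^ (i + j) / (Nat.factorial (i + j) : ℝ) else 0)
      = fun i : ℕ => Real.exp (-μ) * μ ^ (i + j) / (Nat.factorial (i + j) : ℝ) := by
    funext i; simp [Nat.le_add_left]
  have key2 := Summable.sum_add_tsum_nat_add
    (f := fun i : ℕ => Real.exp (-μ) * μ ^ i / (Nat.factorial i : ℝ)) j hs
  rw [tsum_pois μ] at key2
  have h3 : poissonTail j μ
      = ∑' i : ℕ, Real.exp (-μ) * μ ^ (i + j) / (Nat.factorial (i + j) : ℝ) := by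
    rw [poissonTail, ← key, h1, zero_add, h2]
  rw [h3]
  linarith [key2]

lemma poissonTail_pos (j : ℕ) {μ : ℝ} (hμ : 0 < μ) : 0 < poissonTail j μ := by
  have hg := summable_if j μ
  have hle : (if j ≤ j then Real.exp (-μ) * μ ^ j / (Nat.factorial j : ℝ) else 0)
      ≤ poissonTail j μ := by
    apply Summable.le_tsum hg j
    intro i _
    split_ifs with h
    · positivity
    · exact le_rfl
  simp only [le_refl, if_true] at hle
  have h0 : 0 < Real.exp (-μ) * μ ^ j / (Nat.factorial j : ℝ) := by positivity
  exact lt_of_lt_of_le h0 hle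

lemma poissonTail_le_one (j : ℕ) {μ : ℝ} (hμ : 0 < μ) : poissonTail j μ ≤ 1 := by
  rw [poissonTail_eq]
  have : 0 ≤ ∑ i ∈ Finset.range j, Real.exp (-μ) * μ ^ i / (Nat.factorial i : ℝ) := by
    apply Finset.sum_nonneg; intro i _; positivity
  linarith

lemma poissonTail_le (j : ℕ) {μ : ℝ} (hμ0 : 0 < μ) (hμ1 : μ ≤ 1) :
    poissonTail j μ ≤ μ ^ j * Real.exp 1 := by
  have hexp : ∑' i : ℕ, (1:ℝ) ^ i / (Nat.factorial i : ℝ) = Real.exp 1 := by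
    rw [Real.exp_eq_exp_ℝ, NormedSpace.exp_eq_tsum_div]
  have hs1 : Summable (fun i : ℕ => μ ^ j * ((1:ℝ) ^ i / (Nat.factorial i : ℝ))) :=
    ((Real.summable_pow_div_factorial 1).mul_left _)
  have hle : poissonTail j μ ≤ ∑' i : ℕ, μ ^ j * ((1:ℝ) ^ i / (Nat.factorial i : ℝ)) := by
    apply Summable.tsum_le_tsum _ (summable_if j μ) hs1
    intro i
    split_ifs with h
    · have h1 : μ ^ i ≤ μ ^ j := pow_le_pow_of_le_one hμ0.le hμ1 h
      have h2 : Real.exp (-μ) ≤ 1 := by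
        rw [Real.exp_le_one_iff]; linarith
      have h3 : (0:ℝ) < (Nat.factorial i : ℝ) := by positivity
      rw [one_pow, mul_one_div, div_le_div_iff₀ h3 h3]
      have : Real.exp (-μ) * μ ^ i ≤ μ ^ j := by
        calc Real.exp (-μ) * μ ^ i ≤ 1 * μ ^ j :=
              mul_le_mul h2 h1 (by positivity) zero_le_one
          _ = μ ^ j := one_mul _
      nlinarith
    · positivity
  calc poissonTail j μ ≤ ∑' i : ℕ, μ ^ j * ((1:ℝ) ^ i / (Nat.factorial i : ℝ)) := hle
    _ = μ ^ j * Real.exp 1 := by rw [tsum_mul_left, hexp]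

lemma poissonTail_continuous (j : ℕ) : Continuous (poissonTail j) := by
  have h : poissonTail j = fun μ => 1 - ∑ i ∈ Finset.range j,
      Real.exp (-μ) * μ ^ i / (Nat.factorial i : ℝ) := by
    funext μ; exact poissonTail_eq j μ
  rw [h]
  apply Continuous.sub continuous_const
  apply continuous_finset_sum
  intro i _
  exact ((Real.continuous_exp.comp continuous_neg).mul (continuous_pow i)).div_const _

/-- Two-roots claim from Appendix B: for `k ≥ 3` and any
`c > c_k = inf_{μ > 0} μ / ψ_{k-1}(μ)`, the equation `μ / ψ_{k-1}(μ) = c` has at least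
two roots `0 < μ₁ < μ₂`. -/
theorem stmt_11 (k : ℕ) (hk : 3 ≤ k) (c : ℝ)
    (hc : sInf {x : ℝ | ∃ μ : ℝ, 0 < μ ∧ x = μ / poissonTail (k - 1) μ} < c) :
    ∃ μ₁ μ₂ : ℝ, 0 < μ₁ ∧ μ₁ < μ₂ ∧
      μ₁ / poissonTail (k - 1) μ₁ = c ∧ μ₂ / poissonTail (k - 1) μ₂ = c := by
  set j := k - 1 with hj
  have hj2 : 2 ≤ j := by omega
  set f : ℝ → ℝ := fun μ => μ / poissonTail j μ with hf
  obtain ⟨μ₀, hμ₀, hfμ₀⟩ : ∃ μ₀ : ℝ, 0 < μ₀ ∧ f μ₀ < c := by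
    by_contra h
    push_neg at h
    have hne : {x : ℝ | ∃ μ : ℝ, 0 < μ ∧ x = μ / poissonTail j μ}.Nonempty :=
      ⟨1 / poissonTail j 1, 1, one_pos, rfl⟩
    have : c ≤ sInf {x : ℝ | ∃ μ : ℝ, 0 < μ ∧ x = μ / poissonTail j μ} := by
      apply le_csInf hne
      rintro x ⟨μ, hμ, rfl⟩
      exact h μ hμ
    linarith
  have hfpos : ∀ μ : ℝ, 0 < μ → 0 < f μ := fun μ hμ =>
    div_pos hμ (poissonTail_pos j hμ)
  have hcpos : 0 < c := lt_trans (hfpos μ₀ hμ₀) hfμ₀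
  have hfcont : ∀ a b : ℝ, 0 < a → ContinuousOn f (Set.Icc a b) := by
    intro a b ha
    apply ContinuousOn.div continuousOn_id ((poissonTail_continuous j).continuousOn)
    intro x hx
    exact (poissonTail_pos j (lt_of_lt_of_le ha hx.1)).ne'
  set a := min (min μ₀ 1) (1 / (Real.exp 1 * c)) with hadef
  have hapos : 0 < a := by
    apply lt_min (lt_min hμ₀ one_pos)
    positivity
  have ha1 : a ≤ 1 := le_trans (min_le_left _ _) (min_le_right _ _)
  have haμ₀ : a ≤ μ₀ := le_trans (min_le_left _ _) (min_le_left _ _)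
  have hac : a ≤ 1 / (Real.exp 1 * c) := min_le_right _ _
  have hfa : c ≤ f a := by
    have htail : poissonTail j a ≤ a ^ j * Real.exp 1 := poissonTail_le j hapos ha1
    have hpow : a ^ j ≤ a ^ 2 := pow_le_pow_of_le_one hapos.le ha1 hj2
    have htail2 : poissonTail j a ≤ a ^ 2 * Real.exp 1 := by
      calc poissonTail j a ≤ a ^ j * Real.exp 1 := htail
        _ ≤ a ^ 2 * Real.exp 1 :=
            mul_le_mul_of_nonneg_right hpow (Real.exp_pos 1).le
    have hpt : 0 < poissonTail j a := poissonTail_pos j hapos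
    have h1 : a / (a ^ 2 * Real.exp 1) ≤ f a :=
      div_le_div_of_nonneg_left hapos.le hpt htail2
    have h2 : a / (a ^ 2 * Real.exp 1) = 1 / (a * Real.exp 1) := by
      field_simp
    have h3 : c ≤ 1 / (a * Real.exp 1) := by
      rw [le_div_iff₀ (by positivity)]
      have hmul : a * (Real.exp 1 * c) ≤ (1 / (Real.exp 1 * c)) * (Real.exp 1 * c) :=
        mul_le_mul_of_nonneg_right hac (by positivity)
      rw [one_div_mul_cancel (by positivity)] at hmul
      nlinarith [hmul]
    calc c ≤ 1 / (a * Real.exp 1) := h3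
      _ = a / (a ^ 2 * Real.exp 1) := h2.symm
      _ ≤ f a := h1
  set b := max (μ₀ + 1) c with hbdef
  have hbμ₀ : μ₀ < b := lt_of_lt_of_le (by linarith) (le_max_left _ _)
  have hbpos : 0 < b := lt_trans hμ₀ hbμ₀
  have hfb : c ≤ f b := by
    have hpt : 0 < poissonTail j b := poissonTail_pos j hbpos
    have hle1 : poissonTail j b ≤ 1 := poissonTail_le_one j hbpos
    have hdiv : b / 1 ≤ f b := div_le_div_of_nonneg_left hbpos.le hpt hle1
    calc c ≤ b := le_max_right _ _
      _ = b / 1 := (div_one b).symm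
      _ ≤ f b := hdiv
  have haμ₀' : a < μ₀ := by
    rcases lt_or_eq_of_le haμ₀ with h | h
    · exact h
    · rw [h] at hfa; linarith
  obtain ⟨μ₁, hμ₁mem, hμ₁⟩ : ∃ μ₁ ∈ Set.Icc a μ₀, f μ₁ = c := by
    obtain ⟨x, hx, hfx⟩ := intermediate_value_Icc' haμ₀'.le (hfcont a μ₀ hapos)
      (Set.mem_Icc.mpr ⟨hfμ₀.le, hfa⟩)
    exact ⟨x, hx, hfx⟩
  obtain ⟨μ₂, hμ₂mem, hμ₂⟩ : ∃ μ₂ ∈ Set.Icc μ₀ b, f μ₂ = c := by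
    obtain ⟨x, hx, hfx⟩ := intermediate_value_Icc hbμ₀.le (hfcont μ₀ b hμ₀)
      (Set.mem_Icc.mpr ⟨hfμ₀.le, hfb⟩)
    exact ⟨x, hx, hfx⟩
  refine ⟨μ₁, μ₂, lt_of_lt_of_le hapos hμ₁mem.1, ?_, hμ₁, hμ₂⟩
  have h1 : μ₁ < μ₀ := by
    rcases lt_or_eq_of_le hμ₁mem.2 with h | h
    · exact h
    · rw [h] at hμ₁; linarith
  have h2 : μ₀ < μ₂ := by
    rcases lt_or_eq_of_le hμ₂mem.1 with h | h
    · exact h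
    · rw [← h] at hμ₂; linarith
  linarith
end
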